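/- Let f : V(G) → ℕ with f(v) ≥ 2 for all v. Every loopless degree-2f pseudoforest G can be edge-colored with 2 colors so that each color class is a degree-f forest. -/

import Mathlib

open Classical

noncomputable section

namespace MG

variable {V : Type} {E : Type} [Fintype V] [Fintype E] [DecidableEq V]

/-- The number of times vertex `v` occurs as an endpoint of the unordered pair `s`
(so a loop at `v` counts twice). -/
def mult (v : V) (s : Sym2 V) : ℕ :=
  Sym2.lift ⟨fun a b => (if a = v then 1 else 0) + (if b = v then 1 else 0),
    fun _ _ => add_comm _ _⟩ s

/-- The degree of a vertex in the multigraph whose edges `E` have endpoints given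
by `ends` (loops count twice). -/
def degree (ends : E → Sym2 V) (v : V) : ℕ := ∑ e : E, mult v (ends e)

/-- Maximum degree `Δ(G)`. -/
def maxDegree (ends : E → Sym2 V) : ℕ := Finset.univ.sup fun v => degree ends v

/-- `e(S)`: the number of edges with all endpoints in `S`. -/
def edgesWithin (ends : E → Sym2 V) (S : Finset V) : ℕ :=
  (Finset.univ.filter fun e => ∀ v ∈ ends e, v ∈ S).card

/-- The degree of `v` in the subgraph induced by `S`. -/
def degreeIn (ends : E → Sym2 V) (S : Finset V) (v : V) : ℕ :=
  ∑ e ∈ Finset.univ.filter (fun e => ∀ u ∈ ends e, u ∈ S), mult v (ends e)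

/-- Adjacency; a vertex with a loop is adjacent to itself. -/
def Adj (ends : E → Sym2 V) (u v : V) : Prop := ∃ e, ends e = s(u, v)

/-- The multigraph has no loops. -/
def Loopless (ends : E → Sym2 V) : Prop := ∀ e, ¬ (ends e).IsDiag

/-- Reachability by walks. -/
def Reaches (ends : E → Sym2 V) (u v : V) : Prop :=
  Relation.ReflTransGen (Adj ends) u v

/-- The connected component of `v`, as a set of vertices. -/
def component (ends : E → Sym2 V) (v : V) : Finset V :=
  Finset.univ.filter fun u => Reaches ends v u

/-- A pseudoforest: every connected component contains at most one cycle
(a loop counts as a cycle); equivalently, every connected component has at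
most as many edges as vertices. -/
def IsPseudoforest (ends : E → Sym2 V) : Prop :=
  ∀ v : V, edgesWithin ends (component ends v) ≤ (component ends v).card

/-- A forest (acyclic multigraph): every connected component has strictly fewer
edges than vertices. -/
def IsForest (ends : E → Sym2 V) : Prop :=
  ∀ v : V, edgesWithin ends (component ends v) + 1 ≤ (component ends v).card

/-- An orientation assigns to each edge an ordered pair of its endpoints
(tail, head). -/
def IsOrientation (ends : E → Sym2 V) (D : E → V × V) : Prop :=
  ∀ e, Sym2.mk (D e).1 (D e).2 = ends e

/-- Indegree of `v` under the orientation `D`. -/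
def inDeg (D : E → V × V) (v : V) : ℕ := (Finset.univ.filter fun e => (D e).2 = v).card

/-- Outdegree of `v` under the orientation `D`. -/
def outDeg (D : E → V × V) (v : V) : ℕ := (Finset.univ.filter fun e => (D e).1 = v).card

/-- `G` is `(g,h)`-orientable: there is an orientation in which every vertex `v`
has indegree at most `g v` and outdegree at most `h v`. -/
def GHOrientable (ends : E → Sym2 V) (g h : V → ℕ∞) : Prop :=
  ∃ D : E → V × V, IsOrientation ends D ∧
    (∀ v, (inDeg D v : ℕ∞) ≤ g v) ∧ (∀ v, (outDeg D v : ℕ∞) ≤ h v)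

/-- `(g,h)` is a valid pair of functions for `G`. -/
def ValidPair (ends : E → Sym2 V) (g h : V → ℕ∞) : Prop :=
  (∀ v : V, 1 ≤ g v + h v) ∧
  (∀ u v : V, Adj ends u v → 1 ≤ g u + g v) ∧
  (∀ u v : V, Adj ends u v → 1 ≤ h u + h v)

/-- The endpoint map of the subgraph consisting of the edges satisfying `P`. -/
def subEnds (ends : E → Sym2 V) (P : E → Prop) : {e // P e} → Sym2 V :=
  fun e => ends e.val

/-- A `(g,h)`-oriented-coloring: each color class is a `(g,h)`-orientable subgraph. -/
def GHColoring (ends : E → Sym2 V) (g h : V → ℕ∞) {k : ℕ} (C : E → Fin k) : Prop :=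
  ∀ c : Fin k, GHOrientable (subEnds ends fun e => C e = c) g h

/-- The `(g,h)`-oriented chromatic index `χ'_{(g,h)}(G)`. -/
def ghChromaticIndex (ends : E → Sym2 V) (g h : V → ℕ∞) : ℕ :=
  sInf {k | ∃ C : E → Fin k, GHColoring ends g h C}

/-- Ceiling division `⌈a/b⌉` on ℕ. -/
def cdiv (a b : ℕ) : ℕ := (a + b - 1) / b

/-- Replace `∞` values of `g` by the maximum degree `Δ(G)`. -/
def trunc (ends : E → Sym2 V) (g : V → ℕ∞) (v : V) : ℕ :=
  WithTop.untopD (maxDegree ends) (g v)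

/-- The weighted maximum degree `Δ_{(g,h)}(G) = max_v ⌈d(v)/(g(v)+h(v))⌉`
(values `∞` of `g, h` replaced by `Δ(G)`). -/
def ghMaxDegree (ends : E → Sym2 V) (g h : V → ℕ∞) : ℕ :=
  Finset.univ.sup fun v => cdiv (degree ends v) (trunc ends g v + trunc ends h v)

/-- The weighted maximum density
`W_{(g,h)}(G) = max_{S, g(S) ≥ 1, h(S) ≥ 1} ⌈e(S)/min{g(S),h(S)}⌉`
(values `∞` of `g, h` replaced by `Δ(G)`). -/
def ghMaxDensity (ends : E → Sym2 V) (g h : V → ℕ∞) : ℕ :=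
  (Finset.univ.filter fun S : Finset V =>
      (1 ≤ ∑ v ∈ S, g v) ∧ (1 ≤ ∑ v ∈ S, h v)).sup
    fun S => cdiv (edgesWithin ends S)
      (min (∑ v ∈ S, trunc ends g v) (∑ v ∈ S, trunc ends h v))

/-- An edge-coloring into pseudoforests. -/
def PaColoring (ends : E → Sym2 V) {k : ℕ} (C : E → Fin k) : Prop :=
  ∀ c : Fin k, IsPseudoforest (subEnds ends fun e => C e = c)

/-- The pseudoarboricity `pa(G)`. -/
def pa (ends : E → Sym2 V) : ℕ := sInf {k | ∃ C : E → Fin k, PaColoring ends C}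

/-- An edge-coloring into degree-`f` pseudoforests. -/
def PafColoring (ends : E → Sym2 V) (f : V → ℕ) {k : ℕ} (C : E → Fin k) : Prop :=
  ∀ c : Fin k, IsPseudoforest (subEnds ends fun e => C e = c) ∧
    ∀ v, degree (subEnds ends fun e => C e = c) v ≤ f v

/-- The degree-`f` pseudoarboricity `pa_f(G)`. -/
def paf (ends : E → Sym2 V) (f : V → ℕ) : ℕ :=
  sInf {k | ∃ C : E → Fin k, PafColoring ends f C}

/-- The weighted maximum degree `Δ_f(G) = max_v ⌈d(v)/f(v)⌉`. -/
def fMaxDegree (ends : E → Sym2 V) (f : V → ℕ) : ℕ :=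
  Finset.univ.sup fun v => cdiv (degree ends v) (f v)

/-- An edge-coloring into degree-`f` forests. -/
def AfColoring (ends : E → Sym2 V) (f : V → ℕ) {k : ℕ} (C : E → Fin k) : Prop :=
  ∀ c : Fin k, IsForest (subEnds ends fun e => C e = c) ∧
    ∀ v, degree (subEnds ends fun e => C e = c) v ≤ f v

/-- The degree-`f` arboricity `a_f(G)`. -/
def af (ends : E → Sym2 V) (f : V → ℕ) : ℕ :=
  sInf {k | ∃ C : E → Fin k, AfColoring ends f C}

/-- The arboricity `a(G)`. -/
def arboricity (ends : E → Sym2 V) : ℕ :=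
  sInf {k | ∃ C : E → Fin k, ∀ c : Fin k, IsForest (subEnds ends fun e => C e = c)}

/-- The linear arboricity `la(G)`: color classes are linear forests, i.e.
degree-2 forests. -/
def la (ends : E → Sym2 V) : ℕ := af ends fun _ => 2

/-- `G` is `k`-degenerate: every (induced, nonempty) subgraph has a vertex of
degree at most `k`. -/
def Degenerate (ends : E → Sym2 V) (k : ℕ) : Prop :=
  ∀ S : Finset V, S.Nonempty → ∃ v ∈ S, degreeIn ends S v ≤ k

/-- An `f`-coloring: in each color class every vertex `v` has degree at most `f v`. -/
def FColoring (ends : E → Sym2 V) (f : V → ℕ) {k : ℕ} (C : E → Fin k) : Prop :=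
  ∀ c : Fin k, ∀ v, degree (subEnds ends fun e => C e = c) v ≤ f v

/-- The `f`-chromatic index `χ'_f(G)`. -/
def fChromaticIndex (ends : E → Sym2 V) (f : V → ℕ) : ℕ :=
  sInf {k | ∃ C : E → Fin k, FColoring ends f C}

/-- `G` is bipartite: the vertices can be split into two sides so that every
edge has one endpoint on each side. -/
def Bipartite (ends : E → Sym2 V) : Prop :=
  ∃ P : V → Prop, ∀ e : E, ∃ u v, ends e = s(u, v) ∧ P u ∧ ¬ P v

/-- The list analogue `χ'_{(g,h),ℓ}(G)`: the least `k` such that every list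
assignment with lists of size at least `k` admits a coloring from the lists in
which each color class is `(g,h)`-orientable. -/
def ghListChromaticIndex (ends : E → Sym2 V) (g h : V → ℕ∞) : ℕ :=
  sInf {k | ∀ L : E → Finset ℕ, (∀ e, k ≤ (L e).card) →
    ∃ C : E → ℕ, (∀ e, C e ∈ L e) ∧
      ∀ c : ℕ, GHOrientable (subEnds ends fun e => C e = c) g h}

/-- The list degree-`f` pseudoarboricity `pa_{f,ℓ}(G)`. -/
def pafList (ends : E → Sym2 V) (f : V → ℕ) : ℕ :=
  sInf {k | ∀ L : E → Finset ℕ, (∀ e, k ≤ (L e).card) →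
    ∃ C : E → ℕ, (∀ e, C e ∈ L e) ∧
      ∀ c : ℕ, IsPseudoforest (subEnds ends fun e => C e = c) ∧
        ∀ v, degree (subEnds ends fun e => C e = c) v ≤ f v}

/-- The list `f`-chromatic index `χ'_{f,ℓ}(G)`. -/
def fListChromaticIndex (ends : E → Sym2 V) (f : V → ℕ) : ℕ :=
  sInf {k | ∀ L : E → Finset ℕ, (∀ e, k ≤ (L e).card) →
    ∃ C : E → ℕ, (∀ e, C e ∈ L e) ∧
      ∀ c : ℕ, ∀ v, degree (subEnds ends fun e => C e = c) v ≤ f v}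


end MG

/-!
Induction on the number of edges. If a vertex `v` has degree one, its edge `vx` is pendant:
colour `G - vx` by induction and give `vx` a colour in which `x` still has degree below `f x`;
one exists because `x` has degree at most `2 f(x) - 1` in `G - vx`, and a pendant edge closes
no cycle. Otherwise no vertex is a leaf, and since a component `K` of a pseudoforest has degree
sum `2 e(K) ≤ 2 |K|`, every degree is at most `2`. Then colour one edge of each component `0`
and all others `1`: a graph of maximum degree `2` in which each component has a vertex of degree
at most `1` is a forest.
-/

namespace MG

variable {V E : Type}

section Mult

variable [DecidableEq V]

theorem mult_mk (v a b : V) :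
    mult v s(a, b) = (if a = v then 1 else 0) + (if b = v then 1 else 0) := rfl

theorem mult_pos_iff {v : V} {s : Sym2 V} : 0 < mult v s ↔ v ∈ s := by
  induction s using Sym2.ind with
  | _ a b =>
    rw [mult_mk, Sym2.mem_iff]
    split_ifs <;> simp_all [eq_comm]

theorem mult_eq_zero_iff {v : V} {s : Sym2 V} : mult v s = 0 ↔ v ∉ s := by
  rw [← mult_pos_iff, Nat.pos_iff_ne_zero, not_not]

theorem mult_le_one {v : V} {s : Sym2 V} (h : ¬ s.IsDiag) : mult v s ≤ 1 := by
  induction s using Sym2.ind with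
  | _ a b =>
    rw [Sym2.mk_isDiag_iff] at h
    rw [mult_mk]
    by_cases ha : a = v <;> by_cases hb : b = v <;> simp [ha, hb]
    exact h (ha.trans hb.symm)

theorem sum_mult_of_forall_mem {S : Finset V} {s : Sym2 V} (h : ∀ v ∈ s, v ∈ S) :
    ∑ v ∈ S, mult v s = 2 := by
  induction s using Sym2.ind with
  | _ a b =>
    simp only [mult_mk, Finset.sum_add_distrib, Finset.sum_ite_eq, if_pos (h a (by simp)),
      if_pos (h b (by simp))]

end Mult

section Degree

variable [DecidableEq V] [Fintype E] {ends : E → Sym2 V}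

theorem degree_pos_iff {v : V} : 0 < degree ends v ↔ ∃ e, v ∈ ends e := by
  simp [degree, Finset.sum_pos_iff, mult_pos_iff]

theorem degree_subEnds (P : E → Prop) [Fintype {e // P e}] (v : V) :
    degree (subEnds ends P) v = ∑ e ∈ Finset.univ.filter P, mult v (ends e) :=
  (Finset.sum_subtype _ (by simp) (fun e => mult v (ends e))).symm

theorem degree_subEnds_add_mult_le {P : E → Prop} [Fintype {e // P e}] {e : E} (he : ¬ P e)
    (v : V) : degree (subEnds ends P) v + mult v (ends e) ≤ degree ends v := by
  rw [degree_subEnds, degree, ← Finset.sum_filter_add_sum_filter_not Finset.univ P]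
  gcongr
  exact Finset.single_le_sum (f := fun e => mult v (ends e)) (fun _ _ => Nat.zero_le _)
    (Finset.mem_filter.2 ⟨Finset.mem_univ e, he⟩)

theorem degree_subEnds_le (P : E → Prop) [Fintype {e // P e}] (v : V) :
    degree (subEnds ends P) v ≤ degree ends v := by
  rw [degree_subEnds]
  exact Finset.sum_le_sum_of_subset (Finset.subset_univ _)

theorem edgesWithin_subEnds [Fintype V] (P : E → Prop) [Fintype {e // P e}] (S : Finset V) :
    edgesWithin (subEnds ends P) S
      = (Finset.univ.filter fun e => P e ∧ ∀ v ∈ ends e, v ∈ S).card := by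
  unfold edgesWithin subEnds
  rw [← Fintype.card_subtype, ← Fintype.card_subtype]
  exact Fintype.card_congr
    (Equiv.subtypeSubtypeEquivSubtypeInter P fun e => ∀ v ∈ ends e, v ∈ S)

theorem degree_eq_mult_add_degree_erase (e₀ : E) [Fintype {e // e ≠ e₀}] (v : V) :
    degree ends v = mult v (ends e₀) + degree (subEnds ends (· ≠ e₀)) v := by
  rw [degree_subEnds, degree, ← Finset.add_sum_erase _ _ (Finset.mem_univ e₀)]
  congr 2
  ext e
  simp

theorem degree_subEnds_zero_add_one (C : E → Fin 2) [Fintype {e // C e = 0}]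
    [Fintype {e // C e = 1}] (v : V) :
    degree (subEnds ends (C · = 0)) v + degree (subEnds ends (C · = 1)) v = degree ends v := by
  rw [degree_subEnds, degree_subEnds, Finset.sum_filter, Finset.sum_filter,
    ← Finset.sum_add_distrib]
  refine Finset.sum_congr rfl fun e _ => ?_
  obtain h | h : C e = 0 ∨ C e = 1 := by omega
  all_goals simp [h]

theorem exists_degree_subEnds_lt (C : E → Fin 2) {x : V} {k : ℕ} (h : degree ends x < 2 * k) :
    ∃ c, degree (subEnds ends (C · = c)) x < k := by
  by_contra! hk
  have := degree_subEnds_zero_add_one (ends := ends) C x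
  have := hk 0
  have := hk 1
  omega

theorem degree_le_one_of_subsingleton {v : V} (hloop : Loopless ends)
    (h : ∀ e e', v ∈ ends e → v ∈ ends e' → e = e') : degree ends v ≤ 1 := by
  rw [degree, ← Finset.sum_filter_of_ne (p := fun e => v ∈ ends e)
    (fun e _ hne => mult_pos_iff.1 (Nat.pos_of_ne_zero hne))]
  calc ∑ e ∈ Finset.univ.filter (v ∈ ends ·), mult v (ends e)
      ≤ ∑ e ∈ Finset.univ.filter (v ∈ ends ·), 1 :=
        Finset.sum_le_sum fun e _ => mult_le_one (hloop e)
    _ ≤ 1 := by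
      rw [Finset.sum_const, smul_eq_mul, mul_one, Finset.card_le_one]
      simp only [Finset.mem_filter, Finset.mem_univ, true_and]
      exact fun a ha b hb => h a b ha hb

theorem sum_degreeIn_eq_two_mul_edgesWithin [Fintype V] (S : Finset V) :
    ∑ v ∈ S, degreeIn ends S v = 2 * edgesWithin ends S := by
  unfold degreeIn edgesWithin
  rw [Finset.sum_comm, Finset.card_eq_sum_ones, Finset.mul_sum]
  exact Finset.sum_congr rfl fun e he => sum_mult_of_forall_mem (Finset.mem_filter.1 he).2

end Degree

section Component

variable {ends : E → Sym2 V}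

theorem Adj.symm {u v : V} (h : Adj ends u v) : Adj ends v u :=
  let ⟨e, he⟩ := h
  ⟨e, he.trans Sym2.eq_swap⟩

theorem adj_of_mem {e : E} {u v : V} (hu : u ∈ ends e) (hv : v ∈ ends e) (huv : u ≠ v) :
    Adj ends u v := by
  obtain ⟨⟨a, b⟩, hab⟩ := (ends e).exists_rep
  rw [← hab, Sym2.mem_iff] at hu hv
  rcases hu with rfl | rfl <;> rcases hv with rfl | rfl
  all_goals first
    | exact absurd rfl huv
    | exact ⟨e, hab.symm⟩
    | exact ⟨e, hab.symm.trans Sym2.eq_swap⟩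

theorem Reaches.symm {u v : V} (h : Reaches ends u v) : Reaches ends v u := by
  induction h with
  | refl => exact .refl
  | tail _ hab ih => exact ih.head hab.symm

theorem Reaches.mono {E' : Type} {ends' : E' → Sym2 V}
    (hadj : ∀ u v, Adj ends u v → Adj ends' u v) {u v : V} (h : Reaches ends u v) :
    Reaches ends' u v :=
  Relation.ReflTransGen.mono hadj u v h

theorem adj_subEnds {P : E → Prop} {u v : V} (h : Adj (subEnds ends P) u v) : Adj ends u v :=
  let ⟨e, he⟩ := h
  ⟨e.val, he⟩

variable [Fintype V]

theorem mem_component {u v : V} : u ∈ component ends v ↔ Reaches ends v u := by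
  simp [component]

theorem mem_component_self (v : V) : v ∈ component ends v :=
  mem_component.2 Relation.ReflTransGen.refl

theorem component_eq_of_mem {u v : V} (h : u ∈ component ends v) :
    component ends u = component ends v := by
  ext w
  rw [mem_component, mem_component]
  exact ⟨(mem_component.1 h).trans, (mem_component.1 h).symm.trans⟩

theorem mem_component_of_adj {u v w : V} (hu : u ∈ component ends w) (h : Adj ends u v) :
    v ∈ component ends w :=
  mem_component.2 ((mem_component.1 hu).tail h)

theorem mem_component_of_mem_edge {e : E} {u v w : V} (hu : u ∈ ends e) (hv : v ∈ ends e)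
    (huw : u ∈ component ends w) : v ∈ component ends w := by
  by_cases huv : u = v
  · exact huv ▸ huw
  · exact mem_component_of_adj huw (adj_of_mem hu hv huv)

theorem component_eq_singleton {v : V} (h : ∀ e, v ∉ ends e) : component ends v = {v} := by
  ext u
  rw [mem_component, Finset.mem_singleton]
  refine ⟨fun hu => ?_, fun hu => hu ▸ .refl⟩
  obtain rfl | ⟨w, ⟨e, he⟩, -⟩ := hu.cases_head
  · rfl
  · exact absurd (he ▸ Sym2.mem_mk_left v w) (h e)

variable [DecidableEq V] [Fintype E]

theorem degreeIn_component {u v : V} (hv : v ∈ component ends u) :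
    degreeIn ends (component ends u) v = degree ends v := by
  unfold degreeIn degree
  rw [Finset.sum_filter]
  refine Finset.sum_congr rfl fun e _ => ?_
  by_cases he : v ∈ ends e
  · rw [if_pos fun w hw => mem_component_of_mem_edge he hw hv]
  · rw [mult_eq_zero_iff.2 he, ite_self]

theorem sum_degree_component (u : V) :
    ∑ v ∈ component ends u, degree ends v = 2 * edgesWithin ends (component ends u) := by
  rw [← sum_degreeIn_eq_two_mul_edgesWithin]
  exact Finset.sum_congr rfl fun v hv => (degreeIn_component hv).symm

end Component

section Forest

variable [Fintype V] [DecidableEq V] [Fintype E] {ends : E → Sym2 V}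

theorem isForest_of_degree_le_two (h2 : ∀ v, degree ends v ≤ 2)
    (hleaf : ∀ u, ∃ x ∈ component ends u, degree ends x ≤ 1) : IsForest ends := by
  intro u
  obtain ⟨x, hx, hx1⟩ := hleaf u
  have hrest : ∑ v ∈ (component ends u).erase x, degree ends v
      ≤ 2 * ((component ends u).erase x).card := by
    simpa [mul_comm] using Finset.sum_le_sum fun v (_ : v ∈ (component ends u).erase x) => h2 v
  have := Finset.add_sum_erase _ (fun v => degree ends v) hx
  have := Finset.card_erase_add_one hx
  have := sum_degree_component (ends := ends) u
  omega

theorem degree_le_two_of_isPseudoforest (hpf : IsPseudoforest ends)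
    (h1 : ∀ v, degree ends v ≠ 1) (v : V) : degree ends v ≤ 2 := by
  have hge : ∀ u ∈ (component ends v).erase v, 2 ≤ degree ends u := by
    intro u hu
    obtain ⟨huv, hu⟩ := Finset.mem_erase.1 hu
    obtain rfl | ⟨w, -, e, he⟩ := (mem_component.1 hu).cases_tail
    · exact absurd rfl huv
    · have := degree_pos_iff.2 ⟨e, he ▸ Sym2.mem_mk_right w u⟩
      have := h1 u
      omega
  have hrest : 2 * ((component ends v).erase v).card
      ≤ ∑ u ∈ (component ends v).erase v, degree ends u := by
    simpa [mul_comm] using Finset.sum_le_sum hge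
  have hv := mem_component_self (ends := ends) v
  have := Finset.add_sum_erase _ (fun u => degree ends u) hv
  have := Finset.card_erase_add_one hv
  have := sum_degree_component (ends := ends) v
  have := hpf v
  omega

end Forest

section TwoForests

variable [Fintype V] {ends : E → Sym2 V}

theorem exists_mem_component_subEnds_of_reaches {P : E → Prop} {u w : V} {e : E}
    (hw : w ∈ ends e) (he : ¬ P e) (h : Reaches ends u w) :
    ∃ x ∈ component (subEnds ends P) u, ∃ e, ¬ P e ∧ x ∈ ends e := by
  induction h using Relation.ReflTransGen.head_induction_on with
  | refl => exact ⟨w, mem_component_self w, e, he, hw⟩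
  | @head a b hab _ ih =>
    obtain ⟨d, hd⟩ := hab
    by_cases hPd : P d
    · obtain ⟨x, hx, ih⟩ := ih
      have hb : b ∈ component (subEnds ends P) a :=
        mem_component_of_adj (mem_component_self a) ⟨⟨d, hPd⟩, hd⟩
      exact ⟨x, component_eq_of_mem hb ▸ hx, ih⟩
    · exact ⟨a, mem_component_self a, d, hPd, hd ▸ Sym2.mem_mk_left a b⟩

def edgeComponent (ends : E → Sym2 V) (e : E) : Finset V :=
  component ends (ends e).out.1

theorem edgeComponent_eq {e : E} {v : V} (hv : v ∈ ends e) :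
    edgeComponent ends e = component ends v :=
  component_eq_of_mem (mem_component_of_mem_edge hv (Sym2.out_fst_mem _) (mem_component_self v))

/-- A representative edge of the connected component containing `e`. -/
def leader (ends : E → Sym2 V) (e : E) : E :=
  (⟦e⟧ : Quotient (Setoid.ker (edgeComponent ends))).out

theorem edgeComponent_leader (e : E) :
    edgeComponent ends (leader ends e) = edgeComponent ends e :=
  Setoid.ker_apply_mk_out e

theorem leader_eq_leader {e e' : E} (h : edgeComponent ends e = edgeComponent ends e') :
    leader ends e = leader ends e' :=
  congrArg Quotient.out (Quotient.sound (Setoid.ker_def.2 h))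

theorem leader_leader (e : E) : leader ends (leader ends e) = leader ends e :=
  leader_eq_leader (edgeComponent_leader e)

variable [DecidableEq V] [Fintype E]

/-- Colour `0` is a matching, and each component of colour `1` contains a vertex missing one of
its edges, hence of degree at most one. -/
theorem exists_isForest_two_coloring_of_degree_le_two (hloop : Loopless ends)
    (h2 : ∀ v, degree ends v ≤ 2) :
    ∃ C : E → Fin 2, ∀ c, IsForest (subEnds ends fun e => C e = c) := by
  set C : E → Fin 2 := fun e => if leader ends e = e then 0 else 1 with hC
  have hC0 : ∀ e, C e = 0 ↔ leader ends e = e := fun e => by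
    by_cases h : leader ends e = e <;> simp [hC, h]
  refine ⟨C, fun c => ?_⟩
  refine isForest_of_degree_le_two (fun v => (degree_subEnds_le _ v).trans (h2 v)) fun u => ?_
  obtain rfl | rfl : c = 0 ∨ c = 1 := by omega
  · refine ⟨u, mem_component_self u,
      degree_le_one_of_subsingleton (fun e => hloop e.val) fun e e' he he' => ?_⟩
    have hcomp : edgeComponent ends e.val = edgeComponent ends e'.val :=
      (edgeComponent_eq (ends := ends) he).trans (edgeComponent_eq (ends := ends) he').symm
    exact Subtype.ext (((hC0 _).1 e.prop).symm.trans
      ((leader_eq_leader hcomp).trans ((hC0 _).1 e'.prop)))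
  · by_cases hu : degree ends u = 0
    · exact ⟨u, mem_component_self u, (degree_subEnds_le _ u).trans (hu.trans_le zero_le_one)⟩
    obtain ⟨e, he⟩ := degree_pos_iff.1 (Nat.pos_of_ne_zero hu)
    set l := leader ends e
    have hl : ¬ C l = 1 := by
      have : C l = 0 := (hC0 l).2 (leader_leader e)
      omega
    have hw : (ends l).out.1 ∈ component ends u := by
      rw [← edgeComponent_eq he, ← edgeComponent_leader]
      exact mem_component_self _
    obtain ⟨x, hx, e', he', hxe'⟩ :=
      exists_mem_component_subEnds_of_reaches (P := (C · = 1)) (Sym2.out_fst_mem _) hl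
        (mem_component.1 hw)
    have := degree_subEnds_add_mult_le (ends := ends) (P := (C · = 1)) he' x
    have := mult_pos_iff.2 hxe'
    exact ⟨x, hx, by have := h2 x; omega⟩

end TwoForests

section Relabel

variable [DecidableEq V] {E₁ E₂ : Type} [Fintype E₁] [Fintype E₂]
  {ends₁ : E₁ → Sym2 V} {ends₂ : E₂ → Sym2 V}

theorem degree_congr (φ : E₁ ≃ E₂) (hφ : ∀ e, ends₂ (φ e) = ends₁ e) (v : V) :
    degree ends₁ v = degree ends₂ v :=
  Fintype.sum_equiv φ _ _ fun e => by rw [hφ]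

theorem isForest_congr [Fintype V] (φ : E₁ ≃ E₂) (hφ : ∀ e, ends₂ (φ e) = ends₁ e) :
    IsForest ends₁ ↔ IsForest ends₂ := by
  have hadj : Adj ends₁ = Adj ends₂ := by
    ext u v
    exact ⟨fun ⟨e, he⟩ => ⟨φ e, (hφ e).trans he⟩,
      fun ⟨e, he⟩ => ⟨φ.symm e, by rw [← hφ, φ.apply_symm_apply, he]⟩⟩
  have hcomp : component ends₁ = component ends₂ := by
    unfold component Reaches
    rw [hadj]
  have hedges : ∀ S, edgesWithin ends₁ S = edgesWithin ends₂ S := fun S => by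
    unfold edgesWithin
    rw [← Fintype.card_subtype, ← Fintype.card_subtype]
    exact Fintype.card_congr (φ.subtypeEquiv fun e => by rw [hφ])
  simp only [IsForest, hcomp, hedges]

variable {ends : E → Sym2 V} {P : E → Prop} {Q : {e // P e} → Prop} {R : E → Prop}
  [Fintype {e // Q e}] [Fintype {e // R e}]

theorem degree_subEnds_subEnds (hR : ∀ e, R e ↔ ∃ h : P e, Q ⟨e, h⟩) (v : V) :
    degree (subEnds (subEnds ends P) Q) v = degree (subEnds ends R) v :=
  degree_congr (ends₂ := subEnds ends R) ((Equiv.subtypeSubtypeEquivSubtypeExists P Q).trans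
    (Equiv.subtypeEquivRight fun e => (hR e).symm)) (fun _ => rfl) v

theorem isForest_subEnds_subEnds [Fintype V] (hR : ∀ e, R e ↔ ∃ h : P e, Q ⟨e, h⟩) :
    IsForest (subEnds (subEnds ends P) Q) ↔ IsForest (subEnds ends R) :=
  isForest_congr (ends₂ := subEnds ends R) ((Equiv.subtypeSubtypeEquivSubtypeExists P Q).trans
    (Equiv.subtypeEquivRight fun e => (hR e).symm)) (fun _ => rfl)

end Relabel

section Pendant

structure IsPendant (ends : E → Sym2 V) (e₀ : E) (v x : V) : Prop where
  ne : v ≠ x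
  ends_eq : ends e₀ = s(v, x)
  not_mem : ∀ e, e ≠ e₀ → v ∉ ends e

variable {ends : E → Sym2 V} {e₀ : E} {v x : V}

theorem IsPendant.toSubEnds (hp : IsPendant ends e₀ v x) {P : E → Prop} (h : P e₀) :
    IsPendant (subEnds ends P) ⟨e₀, h⟩ v x :=
  ⟨hp.ne, hp.ends_eq, fun e he => hp.not_mem e.val fun h' => he (Subtype.ext h')⟩

theorem IsPendant.not_mem_erase (hp : IsPendant ends e₀ v x) (e : {e // e ≠ e₀}) :
    v ∉ subEnds ends (· ≠ e₀) e :=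
  hp.not_mem e.val e.prop

theorem IsPendant.degree_erase [DecidableEq V] [Fintype E] [Fintype {e // e ≠ e₀}]
    (hp : IsPendant ends e₀ v x) : degree (subEnds ends (· ≠ e₀)) v = 0 :=
  Nat.eq_zero_of_not_pos fun h =>
    let ⟨e, he⟩ := degree_pos_iff.1 h
    hp.not_mem_erase e he

theorem IsPendant.mult_eq [DecidableEq V] (hp : IsPendant ends e₀ v x) (u : V) :
    mult u (ends e₀) = (if v = u then 1 else 0) + (if x = u then 1 else 0) := by
  rw [hp.ends_eq, mult_mk]

theorem exists_isPendant_of_degree_eq_one [DecidableEq V] [Fintype E] (hloop : Loopless ends)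
    (h : degree ends v = 1) : ∃ e₀ x, IsPendant ends e₀ v x := by
  obtain ⟨e₀, he₀⟩ := degree_pos_iff.1 (h ▸ Nat.one_pos)
  refine ⟨e₀, Sym2.Mem.other he₀, ⟨fun hvx => hloop e₀ ?_, (Sym2.other_spec he₀).symm,
    fun e he hve => ?_⟩⟩
  · rw [← Sym2.other_spec he₀, ← hvx, Sym2.mk_isDiag_iff]
  · have := degree_eq_mult_add_degree_erase (ends := ends) e₀ v
    have := mult_pos_iff.2 he₀
    have := degree_pos_iff (ends := subEnds ends (· ≠ e₀)) |>.2 ⟨⟨e, he⟩, hve⟩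
    omega

theorem IsPendant.mem_component_of_mem [Fintype V] (hp : IsPendant ends e₀ v x) {u : V}
    (hv : v ∈ component ends u) : x ∈ component ends u :=
  mem_component_of_adj hv ⟨e₀, hp.ends_eq⟩

theorem IsPendant.degree_le [DecidableEq V] [Fintype E] [Fintype {e // e ≠ e₀}]
    (hp : IsPendant ends e₀ v x) {f : V → ℕ} (hfv : 1 ≤ f v)
    (hfx : degree (subEnds ends (· ≠ e₀)) x < f x)
    (hf : ∀ u, degree (subEnds ends (· ≠ e₀)) u ≤ f u) (u : V) :
    degree ends u ≤ f u := by
  rw [degree_eq_mult_add_degree_erase e₀ u, hp.mult_eq u]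
  by_cases hux : u = x
  · subst hux
    rw [if_neg hp.ne, if_pos rfl]
    omega
  by_cases huv : u = v
  · subst huv
    rw [if_pos rfl, if_neg hp.ne.symm, hp.degree_erase]
    omega
  · rw [if_neg (Ne.symm huv), if_neg (Ne.symm hux), zero_add, zero_add]
    exact hf u

section Components

variable [Fintype V] [DecidableEq V]

theorem IsPendant.component_erase (hp : IsPendant ends e₀ v x) {u : V} (hu : u ≠ v) :
    component (subEnds ends (· ≠ e₀)) u = (component ends u).erase v := by
  ext z
  rw [Finset.mem_erase, mem_component, mem_component]
  constructor
  · intro h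
    refine ⟨fun hz => ?_, h.mono fun _ _ => adj_subEnds⟩
    subst hz
    obtain rfl | ⟨w, -, d, hd⟩ := h.cases_tail
    · exact hu rfl
    · exact hp.not_mem_erase d (hd ▸ Sym2.mem_mk_right w z)
  · rintro ⟨hz, h⟩
    -- contract the pendant edge: send `v` to `x`
    let r : V → V := fun w => if w = v then x else w
    have hstep : ∀ a b, Adj ends a b → Reaches (subEnds ends (· ≠ e₀)) (r a) (r b) := by
      rintro a b ⟨d, hd⟩
      by_cases hde : d = e₀
      · rw [hde, hp.ends_eq, Sym2.eq_iff] at hd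
        have hx : r x = x := if_neg hp.ne.symm
        have hv : r v = x := if_pos rfl
        rcases hd with ⟨rfl, rfl⟩ | ⟨rfl, rfl⟩ <;> rw [hx, hv] <;> exact .refl
      · have ha : a ≠ v := fun hav => hp.not_mem d hde (hav ▸ hd ▸ Sym2.mem_mk_left a b)
        have hb : b ≠ v := fun hbv => hp.not_mem d hde (hbv ▸ hd ▸ Sym2.mem_mk_right a b)
        simp only [r, if_neg ha, if_neg hb]
        exact .single ⟨⟨d, hde⟩, hd⟩
    simpa [Reaches, Function.onFun, r, hu, hz] using Relation.ReflTransGen.lift' r hstep u z h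

theorem IsPendant.exists_component_erase (hp : IsPendant ends e₀ v x) (u : V) :
    ∃ w, component (subEnds ends (· ≠ e₀)) w = (component ends u).erase v := by
  by_cases hvu : v ∈ component ends u
  · exact ⟨x, by rw [hp.component_erase hp.ne.symm,
      component_eq_of_mem (hp.mem_component_of_mem hvu)]⟩
  · exact ⟨u, hp.component_erase fun h => hvu (h ▸ mem_component_self u)⟩

variable [Fintype E] [Fintype {e // e ≠ e₀}]

theorem IsPendant.edgesWithin_erase (hp : IsPendant ends e₀ v x) {K : Finset V}
    (hK : v ∈ K → x ∈ K) :
    edgesWithin ends K + (K.erase v).card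
      = edgesWithin (subEnds ends (· ≠ e₀)) (K.erase v) + K.card := by
  have hcard : edgesWithin (subEnds ends (· ≠ e₀)) (K.erase v)
      = ((Finset.univ.filter fun e => ∀ w ∈ ends e, w ∈ K).erase e₀).card := by
    rw [edgesWithin_subEnds]
    congr 1
    ext e
    simp only [Finset.mem_filter, Finset.mem_erase, Finset.mem_univ, true_and]
    refine and_congr_right fun he => forall₂_congr fun w hw => ?_
    exact and_iff_right fun hwv => hp.not_mem e he (hwv ▸ hw)
  rw [hcard, edgesWithin]
  by_cases hvK : v ∈ K
  · have he₀ : e₀ ∈ Finset.univ.filter fun e => ∀ w ∈ ends e, w ∈ K := by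
      simp [hp.ends_eq, hvK, hK hvK]
    have := Finset.card_erase_add_one he₀
    have := Finset.card_erase_add_one hvK
    omega
  · have he₀ : e₀ ∉ Finset.univ.filter fun e => ∀ w ∈ ends e, w ∈ K := by
      simp [hp.ends_eq, hvK]
    rw [Finset.erase_eq_of_notMem hvK, Finset.erase_eq_of_notMem he₀]

theorem IsPendant.isForest (hp : IsPendant ends e₀ v x)
    (h : IsForest (subEnds ends (· ≠ e₀))) : IsForest ends := by
  intro u
  obtain ⟨w, hw⟩ := hp.exists_component_erase u
  have := h w
  have := hp.edgesWithin_erase (hp.mem_component_of_mem (u := u))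
  rw [hw] at *
  omega

theorem IsPendant.isPseudoforest_erase (hp : IsPendant ends e₀ v x) (h : IsPseudoforest ends) :
    IsPseudoforest (subEnds ends (· ≠ e₀)) := by
  intro u
  by_cases hu : u = v
  · subst hu
    have hcomp := component_eq_singleton hp.not_mem_erase
    have := sum_degree_component (ends := subEnds ends (· ≠ e₀)) u
    rw [hcomp, Finset.sum_singleton, hp.degree_erase] at this
    rw [hcomp]
    omega
  · have := h u
    have := hp.edgesWithin_erase (hp.mem_component_of_mem (u := u))
    rw [hp.component_erase hu]
    omega

end Components

end Pendant

section Extension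

variable [Fintype V] [DecidableEq V] [Fintype E] {ends : E → Sym2 V} {e₀ : E} {v x : V}

theorem IsPendant.exists_afColoring (hp : IsPendant ends e₀ v x) {f : V → ℕ} (hfv : 1 ≤ f v)
    (hfx : degree ends x ≤ 2 * f x) {C' : {e // e ≠ e₀} → Fin 2}
    (hC' : AfColoring (subEnds ends (· ≠ e₀)) f C') :
    ∃ C : E → Fin 2, AfColoring ends f C := by
  obtain ⟨c₀, hc₀⟩ :
      ∃ c₀, degree (subEnds (subEnds ends (· ≠ e₀)) (C' · = c₀)) x < f x := by
    refine exists_degree_subEnds_lt C' ?_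
    have := degree_eq_mult_add_degree_erase (ends := ends) e₀ x
    have : mult x (ends e₀) = 1 := by simp [hp.mult_eq, hp.ne]
    omega
  let C : E → Fin 2 := fun e => if h : e = e₀ then c₀ else C' ⟨e, h⟩
  refine ⟨C, fun c => ?_⟩
  by_cases hc : c = c₀
  · subst hc
    have hC₀ : C e₀ = c := dif_pos rfl
    have hR : ∀ e, (e ≠ e₀ ∧ C e = c) ↔ ∃ h : e ≠ e₀, C' ⟨e, h⟩ = c := by
      intro e
      by_cases he : e = e₀ <;> simp [C, he]
    have hR' : ∀ e, (e ≠ e₀ ∧ C e = c) ↔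
        ∃ h : C e = c, (⟨e, h⟩ : {e // C e = c}) ≠ ⟨e₀, hC₀⟩ := fun e => by
      by_cases he : e = e₀ <;> simp [he]
    have hforest : IsForest (subEnds (subEnds ends (C · = c)) (· ≠ ⟨e₀, hC₀⟩))
        ↔ IsForest (subEnds (subEnds ends (· ≠ e₀)) (C' · = c)) :=
      (isForest_subEnds_subEnds hR').trans (isForest_subEnds_subEnds hR).symm
    have hdeg (u : V) : degree (subEnds (subEnds ends (C · = c)) (· ≠ ⟨e₀, hC₀⟩)) u
        = degree (subEnds (subEnds ends (· ≠ e₀)) (C' · = c)) u :=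
      (degree_subEnds_subEnds hR' u).trans (degree_subEnds_subEnds hR u).symm
    exact ⟨(hp.toSubEnds hC₀).isForest (hforest.2 (hC' c).1),
      (hp.toSubEnds hC₀).degree_le hfv (hdeg x ▸ hc₀) fun u => hdeg u ▸ (hC' c).2 u⟩
  · have hR : ∀ e, C e = c ↔ ∃ h : e ≠ e₀, C' ⟨e, h⟩ = c := fun e => by
      by_cases he : e = e₀ <;> simp [C, he, Ne.symm hc]
    have hdeg (u : V) : degree (subEnds (subEnds ends (· ≠ e₀)) (C' · = c)) u
        = degree (subEnds ends (C · = c)) u :=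
      degree_subEnds_subEnds hR u
    exact ⟨(isForest_subEnds_subEnds hR).1 (hC' c).1, fun u => hdeg u ▸ (hC' c).2 u⟩

end Extension

/-- Observation 3.3: every loopless degree-`2f` pseudoforest can be
edge-colored with 2 colors so that each color class is a degree-`f` forest. -/
theorem pseudoforest_two_coloring {V E : Type} [Fintype V] [Fintype E] [DecidableEq V]
    (ends : E → Sym2 V) (f : V → ℕ) (hf : ∀ v, 2 ≤ f v)
    (hloop : Loopless ends) (hpf : IsPseudoforest ends)
    (hdeg : ∀ v, degree ends v ≤ 2 * f v) :
    ∃ C : E → Fin 2, ∀ c : Fin 2,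
      IsForest (subEnds ends fun e => C e = c) ∧
      ∀ v, degree (subEnds ends fun e => C e = c) v ≤ f v := by
  induction hn : Fintype.card E using Nat.strong_induction_on generalizing E with
  | _ n ih =>
    by_cases h1 : ∃ v, degree ends v = 1
    · obtain ⟨v, hv⟩ := h1
      obtain ⟨e₀, x, hp⟩ := exists_isPendant_of_degree_eq_one hloop hv
      have hcard : Fintype.card {e // e ≠ e₀} < n :=
        hn ▸ Fintype.card_subtype_lt (not_not.2 rfl)
      obtain ⟨C', hC'⟩ := ih _ hcard (subEnds ends (· ≠ e₀)) (fun e => hloop e.val)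
        (hp.isPseudoforest_erase hpf) (fun u => (degree_subEnds_le _ u).trans (hdeg u)) rfl
      exact hp.exists_afColoring (by have := hf v; omega) (hdeg x) hC'
    · have h2 := degree_le_two_of_isPseudoforest hpf (not_exists.1 h1)
      obtain ⟨C, hC⟩ := exists_isForest_two_coloring_of_degree_le_two hloop h2
      exact ⟨C, fun c =>
        ⟨hC c, fun v => (degree_subEnds_le _ v).trans ((h2 v).trans (hf v))⟩⟩

end MG
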